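/- Let n, N ∈ ℕ, let (δ_i)_{1≤i≤N} be a Borel partition of ℂⁿ, let E(·) be a spectral measure on ℂⁿ acting on H, and let V ∈ I. Then Σ_{i=1}^{N} |τ_I(E(δ_i)V)| ≤ τ̃_I(|Re(V)| + |Im(V)|), where Re(V) = (V+V*)/2 and Im(V) = (V−V*)/(2i). -/

import Mathlib

open MeasureTheory Complex Real Filter Topology

noncomputable section

variable {H : Type*} [NormedAddCommGroup H] [InnerProductSpace ℂ H] [CompleteSpace H]

/-- A symmetrically normed ideal of `B(H)`, encoded by its carrier set together with a
globally defined norm function whose defining properties are imposed on the carrier. -/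
structure SymmIdeal (H : Type*) [NormedAddCommGroup H] [InnerProductSpace ℂ H]
    [CompleteSpace H] where
  carrier : Set (H →L[ℂ] H)
  nrm : (H →L[ℂ] H) → ℝ
  zero_mem : 0 ∈ carrier
  add_mem : ∀ {A B : H →L[ℂ] H}, A ∈ carrier → B ∈ carrier → A + B ∈ carrier
  smul_mem : ∀ (c : ℂ) {A : H →L[ℂ] H}, A ∈ carrier → c • A ∈ carrier
  mul_left : ∀ (B : H →L[ℂ] H) {A : H →L[ℂ] H}, A ∈ carrier → B * A ∈ carrier
  mul_right : ∀ {A : H →L[ℂ] H} (B : H →L[ℂ] H), A ∈ carrier → A * B ∈ carrier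
  nrm_nonneg : ∀ A, 0 ≤ nrm A
  nrm_eq_zero : ∀ A ∈ carrier, (nrm A = 0 ↔ A = 0)
  nrm_add : ∀ {A B : H →L[ℂ] H}, A ∈ carrier → B ∈ carrier → nrm (A + B) ≤ nrm A + nrm B
  nrm_smul : ∀ (c : ℂ) (A : H →L[ℂ] H), nrm (c • A) = ‖c‖ * nrm A
  dominated : ∀ {A B : H →L[ℂ] H}, A.IsPositive → (B - A).IsPositive → B ∈ carrier →
    A ∈ carrier ∧ nrm A ≤ nrm B
  opnorm_le : ∃ k > 0, ∀ A ∈ carrier, ‖A‖ ≤ k * nrm A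
  symm_nrm : ∀ (B C : H →L[ℂ] H) {A : H →L[ℂ] H}, A ∈ carrier →
    nrm (B * A * C) ≤ ‖B‖ * nrm A * ‖C‖
  complete : ∀ u : ℕ → (H →L[ℂ] H), (∀ m, u m ∈ carrier) →
    (∀ ε > 0, ∃ N, ∀ p ≥ N, ∀ q ≥ N, nrm (u p - u q) < ε) →
    ∃ A ∈ carrier, ∀ ε > 0, ∃ N, ∀ p ≥ N, nrm (u p - A) < ε

/-- A `‖·‖_I`-bounded trace on a symmetrically normed ideal, encoded as a globally defined
linear functional with the trace property and the norm bound imposed on the ideal. -/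
structure IdealTrace {H : Type*} [NormedAddCommGroup H] [InnerProductSpace ℂ H]
    [CompleteSpace H] (J : SymmIdeal H) where
  τ : (H →L[ℂ] H) →ₗ[ℂ] ℂ
  cyclic : ∀ (A B : H →L[ℂ] H), A ∈ J.carrier → τ (A * B) = τ (B * A)
  bound : ℝ
  bound_spec : ∀ A ∈ J.carrier, ‖τ A‖ ≤ bound * J.nrm A

/-- Positivity of a trace on an ideal. -/
def IdealTrace.Positive {H : Type*} [NormedAddCommGroup H] [InnerProductSpace ℂ H]
    [CompleteSpace H] {J : SymmIdeal H} (T : IdealTrace J) : Prop :=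
  ∀ A ∈ J.carrier, A.IsPositive → ∃ r : ℝ, 0 ≤ r ∧ T.τ A = (r : ℂ)

/-- The Hölder property of the root ideal `I^{1/2} = {A : |A|² ∈ I}` with
`‖A‖_{I^{1/2}} = ‖|A|²‖_I^{1/2}` (Assumption 2.8 of the paper):
`‖AB‖_I ≤ ‖A‖_{I^{1/2}} ‖B‖_{I^{1/2}}` for `A, B ∈ I^{1/2}`. -/
def RootHolder {H : Type*} [NormedAddCommGroup H] [InnerProductSpace ℂ H]
    [CompleteSpace H] (J : SymmIdeal H) : Prop :=
  ∀ A B : H →L[ℂ] H,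
    ContinuousLinearMap.adjoint A * A ∈ J.carrier →
    ContinuousLinearMap.adjoint B * B ∈ J.carrier →
    A * B ∈ J.carrier ∧
      J.nrm (A * B) ≤ Real.sqrt (J.nrm (ContinuousLinearMap.adjoint A * A)) *
        Real.sqrt (J.nrm (ContinuousLinearMap.adjoint B * B))

/-- A spectral (projection-valued) measure on a measurable space `X`, acting on `H`. -/
structure IsPVM {X : Type*} [MeasurableSpace X] (E : Set X → (H →L[ℂ] H)) : Prop where
  proj : ∀ s : Set X, MeasurableSet s → IsSelfAdjoint (E s) ∧ E s * E s = E s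
  empty : E ∅ = 0
  univ : E Set.univ = 1
  inter : ∀ s t : Set X, MeasurableSet s → MeasurableSet t → E (s ∩ t) = E s * E t
  cadd : ∀ s : ℕ → Set X, (∀ m, MeasurableSet (s m)) →
    Pairwise (Function.onFun Disjoint s) →
    ∀ x : H, HasSum (fun m => E (s m) x) (E (⋃ m, s m) x)

/-!
Write `V = A + i B` with `A = Re V`, `B = Im V` self-adjoint. Uniqueness of positive square
roots forces `P = |A|` and `Q = |B|`, hence `-P ≤ A ≤ P` and `-Q ≤ B ≤ Q`. For a spectral
projection `e` and a positive trace `τₖ`, cyclicity gives `τₖ(eA) = τₖ(eAe)`, and compressing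
by `e` keeps `-ePe ≤ eAe ≤ ePe`, so `|τₖ(eA)| ≤ τₖ(eP)`. Summing over the partition, the
projections `E(δᵢ)` add up to `1`, so these bounds add up to `τₖ(P + Q)`; the Jordan
decomposition bounds `|τ|` by `τ₁ + τ₂ + τ₃ + τ₄` termwise.
-/

namespace CFC

variable {A : Type*} [CStarAlgebra A] [PartialOrder A] [StarOrderedRing A]

lemma eq_abs_of_mul_self_eq {a b : A} (ha : IsSelfAdjoint a) (hb : 0 ≤ b)
    (h : b * b = a * a) : b = abs a := by
  rw [abs, ha.star_eq, sqrt_unique h hb]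

lemma neg_abs_le {a : A} (ha : IsSelfAdjoint a) : -abs a ≤ a := by
  rw [neg_le_iff_add_nonneg', abs_add_self a ha]
  exact nsmul_nonneg (posPart_nonneg a) 2

lemma le_abs {a : A} (ha : IsSelfAdjoint a) : a ≤ abs a := by
  rw [← sub_nonneg, abs_sub_self a ha]
  exact nsmul_nonneg (negPart_nonneg a) 2

end CFC

namespace SymmIdeal

variable {J : SymmIdeal H} {A B P : H →L[ℂ] H}

lemma sub_mem (hA : A ∈ J.carrier) (hB : B ∈ J.carrier) : A - B ∈ J.carrier := by
  simpa [sub_eq_add_neg] using J.add_mem hA (J.smul_mem (-1) hB)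

lemma mem_of_nonneg_of_le (hA : 0 ≤ A) (hAB : A ≤ B) (hB : B ∈ J.carrier) :
    A ∈ J.carrier :=
  (J.dominated ((ContinuousLinearMap.nonneg_iff_isPositive A).mp hA)
    ((ContinuousLinearMap.le_def A B).mp hAB) hB).1

lemma add_mem_of_neg_le_of_le (hP : P ∈ J.carrier) (h₁ : -P ≤ A) (h₂ : A ≤ P) :
    P + A ∈ J.carrier :=
  mem_of_nonneg_of_le (neg_le_iff_add_nonneg'.mp h₁) (by gcongr) (J.add_mem hP hP)

end SymmIdeal

namespace IdealTrace

variable {J : SymmIdeal H} {e A B P Q : H →L[ℂ] H}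

lemma trace_mul_eq_trace_mul_mul (T : IdealTrace J) (he : IsIdempotentElem e)
    (hA : A ∈ J.carrier) : T.τ (e * A) = T.τ (e * A * e) := by
  rw [T.cyclic _ e (J.mul_left e hA), ← mul_assoc, he.eq]

lemma re_sum_trace_mul {ι : Type*} [Fintype ι] (T : IdealTrace J) {e : ι → H →L[ℂ] H}
    (he : ∑ i, e i = 1) (A : H →L[ℂ] H) : ∑ i, (T.τ (e i * A)).re = (T.τ A).re := by
  rw [← Complex.re_sum, ← map_sum, ← Finset.sum_mul, he, one_mul]

namespace Positive

variable {T : IdealTrace J}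

lemma norm_le_re (hT : T.Positive) (hP : P ∈ J.carrier) (h₁ : -P ≤ A) (h₂ : A ≤ P) :
    ‖T.τ A‖ ≤ (T.τ P).re := by
  have hPA : 0 ≤ P + A := neg_le_iff_add_nonneg'.mp h₁
  have hPA' : 0 ≤ P + -A := neg_le_iff_add_nonneg'.mp (neg_le_neg h₂)
  obtain ⟨r, hr, hτr⟩ := hT _ (J.add_mem_of_neg_le_of_le hP h₁ h₂)
    ((ContinuousLinearMap.nonneg_iff_isPositive _).mp hPA)
  obtain ⟨s, hs, hτs⟩ := hT _ (J.add_mem_of_neg_le_of_le hP (neg_le_neg h₂) (neg_le.mp h₁))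
    ((ContinuousLinearMap.nonneg_iff_isPositive _).mp hPA')
  rw [map_add] at hτr
  rw [map_add, map_neg] at hτs
  have hA : T.τ A = ((r - s) / 2 : ℝ) := by push_cast; linear_combination (hτr - hτs) / 2
  have hP : T.τ P = ((r + s) / 2 : ℝ) := by push_cast; linear_combination (hτr + hτs) / 2
  rw [hA, hP, Complex.norm_real, Complex.ofReal_re, Real.norm_eq_abs, abs_le]
  constructor <;> linarith

lemma norm_trace_mul_le (hT : T.Positive) (he : IsStarProjection e) (hP : P ∈ J.carrier)
    (h₁ : -P ≤ A) (h₂ : A ≤ P) : ‖T.τ (e * A)‖ ≤ (T.τ (e * P)).re := by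
  have hA : A ∈ J.carrier := by
    simpa using J.sub_mem (J.add_mem_of_neg_le_of_le hP h₁ h₂) hP
  have conj {X Y : H →L[ℂ] H} (h : X ≤ Y) : e * X * e ≤ e * Y * e := by
    simpa only [he.isSelfAdjoint.star_eq] using star_left_conjugate_le_conjugate h e
  rw [T.trace_mul_eq_trace_mul_mul he.isIdempotentElem hA,
    T.trace_mul_eq_trace_mul_mul he.isIdempotentElem hP]
  refine hT.norm_le_re (J.mul_right e (J.mul_left e hP)) ?_ (conj h₂)
  simpa only [mul_neg, neg_mul] using conj h₁

lemma norm_trace_mul_add_I_smul_le (hT : T.Positive) (he : IsStarProjection e)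
    (hP : P ∈ J.carrier) (hQ : Q ∈ J.carrier) (hAP : -P ≤ A) (hPA : A ≤ P)
    (hBQ : -Q ≤ B) (hQB : B ≤ Q) :
    ‖T.τ (e * (A + I • B))‖ ≤ (T.τ (e * (P + Q))).re := by
  rw [mul_add, mul_add, map_add, map_add, mul_smul_comm, map_smul, Complex.add_re]
  calc ‖T.τ (e * A) + I • T.τ (e * B)‖
      ≤ ‖T.τ (e * A)‖ + ‖T.τ (e * B)‖ := by
        simpa [norm_smul] using norm_add_le (T.τ (e * A)) (I • T.τ (e * B))
    _ ≤ _ := add_le_add (hT.norm_trace_mul_le he hP hAP hPA) (hT.norm_trace_mul_le he hQ hBQ hQB)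

end Positive

end IdealTrace

namespace IsPVM

variable {X : Type*} [MeasurableSpace X] {E : Set X → (H →L[ℂ] H)}

lemma isStarProjection (hE : IsPVM E) {s : Set X} (hs : MeasurableSet s) :
    IsStarProjection (E s) :=
  ⟨(hE.proj s hs).2, (hE.proj s hs).1⟩

lemma hasSum_iUnion {ι : Type*} [Countable ι] (hE : IsPVM E) {δ : ι → Set X}
    (hmeas : ∀ i, MeasurableSet (δ i)) (hdisj : Pairwise (Function.onFun Disjoint δ)) (x : H) :
    HasSum (fun i => E (δ i) x) (E (⋃ i, δ i) x) := by
  obtain ⟨f, hf⟩ := Countable.exists_injective_nat ι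
  rw [← hasSum_extend_zero hf]
  convert hE.cadd (Function.extend f δ fun _ => ∅) _ _ x using 1
  · simp only [Pi.zero_def, Function.apply_extend (fun s => E s x), Function.comp_def, hE.empty,
      zero_apply]
  · exact congrArg (fun s => E s x) (iSup_extend_bot hf δ).symm
  · simp [Function.apply_extend MeasurableSet, Function.comp_def, hmeas]
  · exact hdisj.disjoint_extend_bot (hf.factorsThrough _)

lemma sum_eq_one {ι : Type*} [Fintype ι] (hE : IsPVM E) {δ : ι → Set X}
    (hmeas : ∀ i, MeasurableSet (δ i)) (hdisj : Pairwise (Function.onFun Disjoint δ))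
    (hcover : ⋃ i, δ i = Set.univ) : ∑ i, E (δ i) = 1 := by
  ext x
  have h := hE.hasSum_iUnion hmeas hdisj x
  rw [hcover, hE.univ] at h
  simpa using (hasSum_fintype _).unique h

end IsPVM

open ComplexStarModule

lemma Complex.norm_sub_add_I_mul_sub_I_mul_le (z₁ z₂ z₃ z₄ : ℂ) :
    ‖z₁ - z₂ + I * z₃ - I * z₄‖ ≤ ‖z₁‖ + ‖z₂‖ + ‖z₃‖ + ‖z₄‖ := by
  have h₁ := norm_sub_le (z₁ - z₂ + I * z₃) (I * z₄)
  have h₂ := norm_add_le (z₁ - z₂) (I * z₃)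
  have h₃ := norm_sub_le z₁ z₂
  simp only [norm_mul, norm_I, one_mul] at h₁ h₂
  linarith

lemma realPart_coe_eq (V : H →L[ℂ] H) :
    (ℜ V : H →L[ℂ] H) = ((1 : ℂ) / 2) • (V + ContinuousLinearMap.adjoint V) := by
  rw [realPart_apply_coe, ContinuousLinearMap.star_eq_adjoint, ← Complex.coe_smul]
  norm_num

lemma imaginaryPart_coe_eq (V : H →L[ℂ] H) :
    (ℑ V : H →L[ℂ] H) = (I / 2) • (ContinuousLinearMap.adjoint V - V) := by
  rw [imaginaryPart_apply_coe, ContinuousLinearMap.star_eq_adjoint, ← Complex.coe_smul,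
    smul_smul, ← neg_sub, smul_neg, ← neg_smul]
  congr 1
  push_cast
  ring

theorem spectral_partition_trace_bound {n N : ℕ}
    (J : SymmIdeal H) (T T1 T2 T3 T4 : IdealTrace J)
    (hT1 : T1.Positive) (hT2 : T2.Positive) (hT3 : T3.Positive) (hT4 : T4.Positive)
    (hJordan : ∀ A ∈ J.carrier,
      T.τ A = T1.τ A - T2.τ A + Complex.I * T3.τ A - Complex.I * T4.τ A)
    (δ : Fin N → Set (Fin n → ℂ))
    (hmeas : ∀ i, MeasurableSet (δ i))
    (hdisj : Pairwise (Function.onFun Disjoint δ))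
    (hcover : (⋃ i, δ i) = Set.univ)
    (E : Set (Fin n → ℂ) → (H →L[ℂ] H)) (hE : IsPVM E)
    (V : H →L[ℂ] H) (hV : V ∈ J.carrier)
    (P Q : H →L[ℂ] H)
    (hPpos : P.IsPositive) (hPmem : P ∈ J.carrier)
    (hPsq : P * P = (((1 : ℂ)/2) • (V + ContinuousLinearMap.adjoint V)) *
      (((1 : ℂ)/2) • (V + ContinuousLinearMap.adjoint V)))
    (hQpos : Q.IsPositive) (hQmem : Q ∈ J.carrier)
    (hQsq : Q * Q = ((Complex.I/2) • (ContinuousLinearMap.adjoint V - V)) *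
      ((Complex.I/2) • (ContinuousLinearMap.adjoint V - V))) :
    ∑ i : Fin N, ‖T.τ (E (δ i) * V)‖ ≤
      (T1.τ (P + Q) + T2.τ (P + Q) + T3.τ (P + Q) + T4.τ (P + Q)).re := by
  have hPabs : P = CFC.abs (ℜ V : H →L[ℂ] H) :=
    CFC.eq_abs_of_mul_self_eq (ℜ V).2 ((ContinuousLinearMap.nonneg_iff_isPositive P).mpr hPpos)
      (by rwa [realPart_coe_eq])
  have hQabs : Q = CFC.abs (ℑ V : H →L[ℂ] H) :=
    CFC.eq_abs_of_mul_self_eq (ℑ V).2 ((ContinuousLinearMap.nonneg_iff_isPositive Q).mpr hQpos)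
      (by rwa [imaginaryPart_coe_eq])
  have hbound (T' : IdealTrace J) (hT' : T'.Positive) (i : Fin N) :
      ‖T'.τ (E (δ i) * V)‖ ≤ (T'.τ (E (δ i) * (P + Q))).re := by
    have h := hT'.norm_trace_mul_add_I_smul_le (hE.isStarProjection (hmeas i)) hPmem hQmem
      (hPabs ▸ CFC.neg_abs_le (ℜ V).2) (hPabs ▸ CFC.le_abs (ℜ V).2)
      (hQabs ▸ CFC.neg_abs_le (ℑ V).2) (hQabs ▸ CFC.le_abs (ℑ V).2)
    rwa [realPart_add_I_smul_imaginaryPart] at h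
  have hE1 := hE.sum_eq_one hmeas hdisj hcover
  calc ∑ i, ‖T.τ (E (δ i) * V)‖
      ≤ ∑ i, ((T1.τ (E (δ i) * (P + Q))).re + (T2.τ (E (δ i) * (P + Q))).re +
          (T3.τ (E (δ i) * (P + Q))).re + (T4.τ (E (δ i) * (P + Q))).re) := by
        refine Finset.sum_le_sum fun i _ => ?_
        rw [hJordan _ (J.mul_left _ hV)]
        refine (Complex.norm_sub_add_I_mul_sub_I_mul_le _ _ _ _).trans ?_
        gcongr <;> apply hbound <;> assumption
    _ = _ := by
        simp only [Finset.sum_add_distrib, IdealTrace.re_sum_trace_mul _ hE1, Complex.add_re]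

end
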